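/- The Dirichlet density integrates to one; equivalently, the multivariate Beta integral holds: ∫_S ∏_{i=0}^{K−1} p_i(x)^{α_i − 1} dx = (∏_{i=0}^{K−1} Γ(α_i)) / Γ(α₀), where the integral is with respect to Lebesgue measure on ℝ^{K−1}. -/

import Mathlib

open Real MeasureTheory

/-- The open simplex `S ⊆ ℝ^{K-1}`: all coordinates positive and summing to less than 1. -/
def dirSimplex (K : ℕ) : Set (Fin (K - 1) → ℝ) :=
  {x | (∀ i, 0 < x i) ∧ ∑ i, x i < 1}

/-- The probability vector `p(x) ∈ ℝ^K` associated to `x ∈ ℝ^{K-1}`: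
`pᵢ(x) = xᵢ` for `i < K - 1` and `p_{K-1}(x) = 1 - ∑_{i<K-1} xᵢ`. -/
noncomputable def probVec (K : ℕ) (x : Fin (K - 1) → ℝ) (i : Fin K) : ℝ :=
  if h : (i : ℕ) < K - 1 then x ⟨i, h⟩ else 1 - ∑ j, x j

/-- The Dirichlet density `f_α(x) = (Γ(α₀) / ∏ᵢ Γ(αᵢ)) ∏ᵢ pᵢ(x)^{αᵢ - 1}` (on the simplex). -/
noncomputable def dirDensity {K : ℕ} (α : Fin K → ℝ) (x : Fin (K - 1) → ℝ) : ℝ :=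
  (Real.Gamma (∑ i, α i) / ∏ i, Real.Gamma (α i)) * ∏ i, probVec K x i ^ (α i - 1)

/-- Dirichlet expectation `E_α[g] = ∫_S g(p(x)) f_α(x) dx` (Lebesgue measure on `ℝ^{K-1}`). -/
noncomputable def dirE {K : ℕ} (α : Fin K → ℝ) (g : (Fin K → ℝ) → ℝ) : ℝ :=
  ∫ x in dirSimplex K, g (probVec K x) * dirDensity α x

/-- The digamma function: the derivative of `log ∘ Γ`. -/
noncomputable def digamma (t : ℝ) : ℝ := deriv (fun s => Real.log (Real.Gamma s)) t

/-- The trigamma function: the second derivative of `log ∘ Γ`. -/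
noncomputable def trigamma (t : ℝ) : ℝ := deriv (deriv (fun s => Real.log (Real.Gamma s))) t

/-- The rising factorial `z^{(n)} = z (z+1) ⋯ (z+n-1)`. -/
noncomputable def risingFac (z : ℝ) (n : ℕ) : ℝ := ∏ k ∈ Finset.range n, (z + (k : ℝ))

/-! Write a point of `ℝ^{n+1}` as `(y, t)`. For fixed `y` in the simplex, with `c = 1 - ∑ yⱼ`,
integrating out `t` gives the scaled Beta integral
`∫₀^c t^{a-1} (c - t)^{b-1} dt = c^{a+b-1} B(a, b)`, which leaves the same integral in one
dimension less, with the last two exponents `a, b` merged into `a + b`. Induction on the dimension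
and `B(a, b) = Γ(a) Γ(b) / Γ(a + b)` give the product formula. Integrands are taken
`ℝ≥0∞`-valued so that Tonelli applies without integrability side conditions. -/

open Set ProbabilityTheory
open scoped ENNReal

theorem lintegral_Ioo_rpow_mul_one_sub_rpow {a b : ℝ} (ha : 0 < a) (hb : 0 < b) :
    ∫⁻ u in Ioo 0 1, ENNReal.ofReal (u ^ (a - 1) * (1 - u) ^ (b - 1)) =
      ENNReal.ofReal (beta a b) := by
  have h := lintegral_betaPDF_eq_one ha hb
  have hB := beta_pos ha hb
  simp_rw [lintegral_betaPDF, mul_assoc, ENNReal.ofReal_mul (one_div_pos.2 hB).le] at h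
  rw [lintegral_const_mul' _ _ ENNReal.ofReal_ne_top, one_div,
    ENNReal.ofReal_inv_of_pos hB] at h
  rw [ENNReal.eq_inv_of_mul_eq_one_left ((mul_comm _ _).trans h), inv_inv]

theorem lintegral_Ioo_rpow_mul_sub_rpow {a b c : ℝ} (ha : 0 < a) (hb : 0 < b) (hc : 0 < c) :
    ∫⁻ t in Ioo 0 c, ENNReal.ofReal (t ^ (a - 1)) * ENNReal.ofReal ((c - t) ^ (b - 1)) =
      ENNReal.ofReal (c ^ (a + b - 1) * beta a b) := by
  have himage : (c * ·) '' Ioo 0 1 = Ioo 0 c := by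
    rw [image_mul_left_Ioo hc, mul_zero, mul_one]
  have hscale : ∀ u ∈ Ioo (0 : ℝ) 1, |c| * ((c * u) ^ (a - 1) * (c - c * u) ^ (b - 1)) =
      c ^ (a + b - 1) * (u ^ (a - 1) * (1 - u) ^ (b - 1)) := by
    rintro u ⟨hu0, hu1⟩
    rw [abs_of_pos hc, show c - c * u = c * (1 - u) by ring, mul_rpow hc.le hu0.le,
      mul_rpow hc.le (by linarith), show a + b - 1 = 1 + (a - 1) + (b - 1) by ring,
      rpow_add hc, rpow_add hc, rpow_one]
    ring
  rw [← himage, lintegral_image_eq_lintegral_abs_deriv_mul measurableSet_Ioo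
      (fun u _ => (hasDerivAt_const_mul c).hasDerivWithinAt)
      (mul_right_injective₀ hc.ne').injOn]
  calc ∫⁻ u in Ioo 0 1, ENNReal.ofReal |c| *
        (ENNReal.ofReal ((c * u) ^ (a - 1)) * ENNReal.ofReal ((c - c * u) ^ (b - 1)))
      = ∫⁻ u in Ioo 0 1, ENNReal.ofReal (c ^ (a + b - 1)) *
          ENNReal.ofReal (u ^ (a - 1) * (1 - u) ^ (b - 1)) := by
        refine setLIntegral_congr_fun measurableSet_Ioo fun u hu => ?_
        rw [← ENNReal.ofReal_mul (rpow_nonneg (mul_pos hc hu.1).le _),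
          ← ENNReal.ofReal_mul (abs_nonneg c),
          ← ENNReal.ofReal_mul (by positivity), hscale u hu]
    _ = ENNReal.ofReal (c ^ (a + b - 1) * beta a b) := by
        rw [lintegral_const_mul' _ _ ENNReal.ofReal_ne_top,
          lintegral_Ioo_rpow_mul_one_sub_rpow ha hb, ← ENNReal.ofReal_mul (by positivity)]

theorem lintegral_fin_snoc {α : Type*} [MeasureSpace α] [SigmaFinite (volume : Measure α)]
    {n : ℕ} (f : (Fin (n + 1) → α) → ℝ≥0∞) (hf : Measurable f) :
    ∫⁻ x, f x = ∫⁻ y : Fin n → α, ∫⁻ t, f (Fin.snoc y t) := by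
  set e := MeasurableEquiv.piFinSuccAbove (fun _ : Fin (n + 1) => α) (Fin.last n)
  rw [← (volume_preserving_piFinSuccAbove _ _).symm.lintegral_comp_emb
      e.symm.measurableEmbedding, Measure.volume_eq_prod,
    lintegral_prod_symm' (fun p => f (e.symm p)) (hf.comp e.symm.measurable)]
  simp [e, MeasurableEquiv.piFinSuccAbove_symm_apply, Fin.insertNthEquiv, Fin.insertNth_last']

/-- `dirSimplex (n + 1)`, with ambient space `Fin n → ℝ` instead of `Fin (n + 1 - 1) → ℝ`. The two
are definitionally equal, and so are `probVec (n + 1) x` and `Fin.snoc x (1 - ∑ j, x j)`. -/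
def openSimplex (n : ℕ) : Set (Fin n → ℝ) :=
  {x | (∀ i, 0 < x i) ∧ ∑ i, x i < 1}

theorem measurableSet_openSimplex (n : ℕ) : MeasurableSet (openSimplex n) := by
  unfold openSimplex
  measurability

theorem snoc_mem_openSimplex_iff {n : ℕ} (y : Fin n → ℝ) (t : ℝ) :
    Fin.snoc y t ∈ openSimplex (n + 1) ↔ y ∈ openSimplex n ∧ t ∈ Ioo 0 (1 - ∑ j, y j) := by
  simp only [openSimplex, mem_ofPred_eq, Fin.forall_fin_succ', Fin.snoc_castSucc, Fin.snoc_last,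
    Fin.sum_snoc, mem_Ioo]
  constructor
  · rintro ⟨⟨hy, ht⟩, hsum⟩
    exact ⟨⟨hy, by linarith⟩, ht, by linarith⟩
  · rintro ⟨⟨hy, -⟩, ht, hsum⟩
    exact ⟨⟨hy, ht⟩, by linarith⟩

theorem snoc_one_sub_sum_pos {n : ℕ} {x : Fin n → ℝ} (hx : x ∈ openSimplex n)
    (i : Fin (n + 1)) : 0 < (Fin.snoc x (1 - ∑ j, x j) : Fin (n + 1) → ℝ) i := by
  induction i using Fin.lastCases with
  | last => simpa using hx.2
  | cast j => simpa using hx.1 j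

noncomputable def dirichletWeight {n : ℕ} (α : Fin (n + 1) → ℝ) : (Fin n → ℝ) → ℝ≥0∞ :=
  (openSimplex n).indicator fun x =>
    ∏ i, ENNReal.ofReal ((Fin.snoc x (1 - ∑ j, x j) : Fin (n + 1) → ℝ) i ^ (α i - 1))

theorem measurable_dirichletWeight {n : ℕ} (α : Fin (n + 1) → ℝ) :
    Measurable (dirichletWeight α) := by
  refine (Finset.measurable_prod _ fun i _ => ?_).indicator (measurableSet_openSimplex n)
  fun_prop

theorem prod_ofReal_snoc_rpow {n : ℕ} (x γ : Fin n → ℝ) (s a : ℝ) :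
    ∏ i, ENNReal.ofReal ((Fin.snoc x s : Fin (n + 1) → ℝ) i ^
        ((Fin.snoc γ a : Fin (n + 1) → ℝ) i - 1)) =
      (∏ i, ENNReal.ofReal (x i ^ (γ i - 1))) * ENNReal.ofReal (s ^ (a - 1)) := by
  simp [Fin.prod_univ_castSucc]

theorem lintegral_dirichletWeight_snoc {n : ℕ} (γ : Fin n → ℝ) {a b : ℝ} (ha : 0 < a)
    (hb : 0 < b) (y : Fin n → ℝ) :
    ∫⁻ t, dirichletWeight (Fin.snoc (Fin.snoc γ a) b) (Fin.snoc y t) =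
      ENNReal.ofReal (beta a b) * dirichletWeight (Fin.snoc γ (a + b)) y := by
  by_cases hy : y ∈ openSimplex n
  swap
  · simp [dirichletWeight, snoc_mem_openSimplex_iff, hy]
  set c := 1 - ∑ j, y j
  set P := ∏ j, ENNReal.ofReal (y j ^ (γ j - 1))
  have hc : 0 < c := by linarith [hy.2]
  have hslice : ∀ t, dirichletWeight (Fin.snoc (Fin.snoc γ a) b) (Fin.snoc y t) =
      (Ioo 0 c).indicator
        (fun t => P * (ENNReal.ofReal (t ^ (a - 1)) * ENNReal.ofReal ((c - t) ^ (b - 1)))) t := by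
    intro t
    have hmem : Fin.snoc y t ∈ openSimplex (n + 1) ↔ t ∈ Ioo 0 c := by
      rw [snoc_mem_openSimplex_iff, and_iff_right hy]
    by_cases ht : t ∈ Ioo 0 c
    · rw [dirichletWeight, indicator_of_mem (hmem.2 ht), indicator_of_mem ht,
        prod_ofReal_snoc_rpow, prod_ofReal_snoc_rpow, Fin.sum_snoc, mul_assoc,
        show 1 - (∑ j, y j + t) = c - t by ring]
    · rw [dirichletWeight, indicator_of_notMem (mt hmem.1 ht), indicator_of_notMem ht]
  rw [lintegral_congr hslice, lintegral_indicator measurableSet_Ioo,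
    lintegral_const_mul' _ _ (ENNReal.prod_ne_top fun _ _ => ENNReal.ofReal_ne_top),
    lintegral_Ioo_rpow_mul_sub_rpow ha hb hc, dirichletWeight, indicator_of_mem hy,
    prod_ofReal_snoc_rpow, ENNReal.ofReal_mul (by positivity)]
  ring

theorem beta_mul_prod_Gamma_div_snoc {n : ℕ} (γ : Fin n → ℝ) {a b : ℝ} (ha : 0 < a)
    (hb : 0 < b) :
    beta a b * ((∏ i, Gamma ((Fin.snoc γ (a + b) : Fin (n + 1) → ℝ) i)) /
        Gamma (∑ i, (Fin.snoc γ (a + b) : Fin (n + 1) → ℝ) i)) =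
      (∏ i, Gamma ((Fin.snoc (Fin.snoc γ a) b : Fin (n + 2) → ℝ) i)) /
        Gamma (∑ i, (Fin.snoc (Fin.snoc γ a) b : Fin (n + 2) → ℝ) i) := by
  have hab : Gamma (a + b) ≠ 0 := (Gamma_pos_of_pos (add_pos ha hb)).ne'
  simp only [Fin.prod_univ_castSucc, Fin.snoc_castSucc, Fin.snoc_last, Fin.sum_snoc, beta,
    add_assoc]
  field_simp

theorem lintegral_dirichletWeight (n : ℕ) (α : Fin (n + 1) → ℝ) (hα : ∀ i, 0 < α i) :
    ∫⁻ x, dirichletWeight α x = ENNReal.ofReal ((∏ i, Gamma (α i)) / Gamma (∑ i, α i)) := by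
  induction n with
  | zero =>
    have hα0 : Gamma (α 0) ≠ 0 := (Gamma_pos_of_pos (hα 0)).ne'
    have hweight : dirichletWeight α = 1 := by
      ext x
      simp [dirichletWeight, openSimplex, Fin.snoc]
    simp [hweight, hα0, volume_pi]
  | succ n ih =>
    obtain ⟨γ, a, b, rfl⟩ : ∃ γ a b, α = Fin.snoc (Fin.snoc γ a) b :=
      ⟨Fin.init (Fin.init α), _, _, by rw [Fin.snoc_init_self, Fin.snoc_init_self]⟩
    have ha : 0 < a := by simpa using hα (Fin.last n).castSucc
    have hb : 0 < b := by simpa using hα (Fin.last (n + 1))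
    have hβ : ∀ i, 0 < (Fin.snoc γ (a + b) : Fin (n + 1) → ℝ) i := by
      intro i
      induction i using Fin.lastCases with
      | last => simpa using add_pos ha hb
      | cast j => simpa using hα j.castSucc.castSucc
    rw [lintegral_fin_snoc _ (measurable_dirichletWeight _)]
    simp_rw [lintegral_dirichletWeight_snoc γ ha hb]
    rw [lintegral_const_mul' _ _ ENNReal.ofReal_ne_top, ih _ hβ,
      ← ENNReal.ofReal_mul (beta_pos ha hb).le, beta_mul_prod_Gamma_div_snoc γ ha hb]

theorem integral_openSimplex_prod_rpow (n : ℕ) (α : Fin (n + 1) → ℝ) (hα : ∀ i, 0 < α i) :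
    ∫ x in openSimplex n, ∏ i, (Fin.snoc x (1 - ∑ j, x j) : Fin (n + 1) → ℝ) i ^ (α i - 1) =
      (∏ i, Gamma (α i)) / Gamma (∑ i, α i) := by
  have hpos : ∀ x ∈ openSimplex n, ∀ i,
      0 ≤ (Fin.snoc x (1 - ∑ j, x j) : Fin (n + 1) → ℝ) i ^ (α i - 1) :=
    fun x hx i => (rpow_pos_of_pos (snoc_one_sub_sum_pos hx i) _).le
  rw [integral_eq_lintegral_of_nonneg_ae
      (ae_restrict_of_forall_mem (measurableSet_openSimplex n) fun x hx =>
        Finset.prod_nonneg fun i _ => hpos x hx i)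
      (Finset.measurable_prod _ fun i _ => by fun_prop).aestronglyMeasurable,
    setLIntegral_congr_fun (measurableSet_openSimplex n) fun x hx =>
      ENNReal.ofReal_prod_of_nonneg fun i _ => hpos x hx i,
    ← lintegral_indicator (measurableSet_openSimplex n)]
  rw [← dirichletWeight, lintegral_dirichletWeight n α hα, ENNReal.toReal_ofReal]
  exact div_nonneg (Finset.prod_nonneg fun i _ => (Gamma_pos_of_pos (hα i)).le)
    (Gamma_pos_of_pos (Finset.sum_pos (fun i _ => hα i) Finset.univ_nonempty)).le

/-- **The Dirichlet density integrates to one (multivariate Beta integral):**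
`∫_S ∏ᵢ pᵢ(x)^{αᵢ-1} dx = (∏ᵢ Γ(αᵢ)) / Γ(α₀)`. -/
theorem dirichlet_beta_integral (K : ℕ) (hK : 1 ≤ K) (α : Fin K → ℝ)
    (hα : ∀ i, 0 < α i) :
    (∫ x in dirSimplex K, ∏ i, probVec K x i ^ (α i - 1)) =
      (∏ i, Real.Gamma (α i)) / Real.Gamma (∑ i, α i) := by
  obtain ⟨n, rfl⟩ : ∃ n, K = n + 1 := ⟨K - 1, by omega⟩
  exact integral_openSimplex_prod_rpow n α hα
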